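/- Let P be a parabolic subgroup of W, X = Fix_V(P), Q = Z_W(X^⊥), and N = N_W(P) the normalizer of P in W. Then: (a) Q is a normal subgroup of N; (b) P ∩ Q is trivial; (c) every element of P commutes with every element of Q (so the subgroup P·Q generated by P and Q is isomorphic to the direct product P × Q); and (d) there exists a subgroup D of N such that P·Q and D are complementary in N, i.e., (P·Q) ∩ D is trivial and (P·Q)·D = N. -/

import Mathlib

open scoped RealInnerProductSpace

variable {V : Type*} [NormedAddCommGroup V] [InnerProductSpace ℝ V] [FiniteDimensional ℝ V]

/-- `r` is a reflection: there is a nonzero root `α` with `r α = -α` and `r` fixes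
every vector orthogonal to `α`. -/
def IsReflection (r : V ≃ₗᵢ[ℝ] V) : Prop :=
  ∃ α : V, α ≠ 0 ∧ r α = -α ∧ ∀ v : V, ⟪α, v⟫ = 0 → r v = v

/-- The pointwise stabilizer in `W` of a set `s ⊆ V`. -/
def pointwiseStabilizer (W : Subgroup (V ≃ₗᵢ[ℝ] V)) (s : Set V) : Subgroup (V ≃ₗᵢ[ℝ] V) where
  carrier := {w | w ∈ W ∧ ∀ v ∈ s, w v = v}
  one_mem' := ⟨W.one_mem, fun v _ => rfl⟩
  mul_mem' := fun {a b} ha hb => ⟨W.mul_mem ha.1 hb.1, fun v hv => by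
    have h : (a * b) v = a (b v) := rfl
    rw [h, hb.2 v hv, ha.2 v hv]⟩
  inv_mem' := fun {a} ha => ⟨W.inv_mem ha.1, fun v hv => by
    show a.symm v = v
    conv_lhs => rw [← ha.2 v hv]
    exact a.symm_apply_apply v⟩

/-- The fixed-point subspace of a subgroup `U` of the isometry group of `V`. -/
def fixedSubmodule (U : Subgroup (V ≃ₗᵢ[ℝ] V)) : Submodule ℝ V where
  carrier := {v | ∀ u ∈ U, u v = v}
  zero_mem' := fun u _ => map_zero u
  add_mem' := fun {a b} ha hb u hu => by rw [map_add, ha u hu, hb u hu]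
  smul_mem' := fun c v hv u hu => by rw [map_smul, hv u hu]

/-!
`P` fixes `X` pointwise and `Q` fixes `Xᗮ` pointwise, so on `V = X ⊕ Xᗮ` they act on
complementary factors; this gives (a)–(c), since `N` preserves `X = Fix P` and hence `Xᗮ`.

For (d), pick `x₀ ∈ X` and `y₀ ∈ Xᗮ` off all reflecting hyperplanes and let `D` be the stabilizer
in `N` of the chamber of `x₀` cut out by the roots in `X` and of the chamber of `y₀` cut out by the
roots in `Xᗮ`. The reflections in these roots lie in `Q` and `P` respectively. Given `n ∈ N`,
choose `p ∈ P` with `p n y₀` closest to `y₀`, then `q ∈ Q` with `q p n x₀` closest to `x₀`: no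
reflection of `P` (resp. `Q`) separates these points, so `q p n ∈ D`. Conversely, an element `g`
of `W` fixing a subspace `Y` and stabilizing such a chamber transverse to `Y` fixes the sum `c` of
its orbit through the base point, which lies in the chamber; by Steinberg's theorem `g` is a
product of reflections fixing `Y` and `c`, and there are none. Hence `(P ⊔ Q) ⊓ D = ⊥`.

Steinberg's theorem (the pointwise stabilizer in `W` of a subspace is generated by the reflections
it contains) is proved with a simple system: after moving the point into the closed fundamental
chamber, induct on the number of positive roots made negative, using the exchange condition to
find a simple root that is sent negative and must then be orthogonal to the point.
-/

theorem Subgroup.exists_mul_eq_of_mem_sup {G : Type*} [Group G] {H K : Subgroup G} {g : G}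
    (hg : g ∈ H ⊔ K) (hHK : ∀ h ∈ H, ∀ k ∈ K, Commute h k) : ∃ h ∈ H, ∃ k ∈ K, h * k = g := by
  rw [← H.range_subtype, ← K.range_subtype,
    ← MonoidHom.noncommCoprod_range H.subtype K.subtype fun h k => hHK h h.2 k k.2] at hg
  obtain ⟨⟨h, k⟩, rfl⟩ := hg
  exact ⟨h, h.2, k, k.2, rfl⟩

section ReflectionGroups

variable {E : Type*} [NormedAddCommGroup E] [InnerProductSpace ℝ E]

/-! ### Reflections in hyperplanes -/

noncomputable def rootReflection (α : E) : E ≃ₗᵢ[ℝ] E := (ℝ ∙ α)ᗮ.reflection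

section rootReflection

variable {α : E}

theorem rootReflection_apply_self (α : E) : rootReflection α α = -α :=
  Submodule.reflection_orthogonalComplement_singleton_eq_neg α

theorem rootReflection_apply_eq_self_iff {x : E} : rootReflection α x = x ↔ ⟪α, x⟫ = 0 := by
  rw [rootReflection, Submodule.reflection_eq_self_iff,
    Submodule.mem_orthogonal_singleton_iff_inner_right]

theorem rootReflection_rootReflection (α x : E) : rootReflection α (rootReflection α x) = x :=
  Submodule.reflection_reflection _ x

theorem rootReflection_smul {t : ℝ} (ht : t ≠ 0) (α : E) :
    rootReflection (t • α) = rootReflection α := by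
  simp only [rootReflection, Submodule.span_singleton_smul_eq ht.isUnit]

theorem rootReflection_neg (α : E) : rootReflection (-α) = rootReflection α := by
  rw [← neg_one_smul ℝ α, rootReflection_smul (by norm_num)]

theorem rootReflection_mul_self (α : E) : rootReflection α * rootReflection α = 1 :=
  Submodule.reflection_mul_reflection _

theorem rootReflection_inv (α : E) : (rootReflection α)⁻¹ = rootReflection α :=
  Submodule.reflection_inv

theorem rootReflection_apply (hα : ‖α‖ = 1) (x : E) :
    rootReflection α x = x - (2 * ⟪α, x⟫) • α := by
  rw [rootReflection, Submodule.reflection_orthogonal_apply, Submodule.reflection_singleton_apply,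
    hα]
  simp only [RCLike.ofReal_real_eq_id, id, one_pow, div_one]
  module

theorem mul_rootReflection_mul_inv (w : E ≃ₗᵢ[ℝ] E) (hα : ‖α‖ = 1) :
    w * rootReflection α * w⁻¹ = rootReflection (w α) := by
  ext x
  have hx : w (w.symm x) = x := w.apply_symm_apply x
  have hinner : ⟪α, w.symm x⟫ = ⟪w α, x⟫ := by rw [← w.inner_map_map, hx]
  simp only [LinearIsometryEquiv.coe_mul, LinearIsometryEquiv.coe_inv, Function.comp_apply,
    rootReflection_apply hα, rootReflection_apply (w.norm_map α ▸ hα), map_sub, map_smul, hinner,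
    hx]

theorem eq_rootReflection_of_apply {r : E ≃ₗᵢ[ℝ] E} (hrα : r α = -α)
    (hfix : ∀ v, ⟪α, v⟫ = 0 → r v = v) : r = rootReflection α := by
  ext x
  obtain ⟨y, hy, z, hz, rfl⟩ := (ℝ ∙ α).exists_add_mem_mem_orthogonal x
  obtain ⟨t, rfl⟩ := Submodule.mem_span_singleton.mp hy
  rw [Submodule.mem_orthogonal_singleton_iff_inner_right] at hz
  rw [map_add, map_add, map_smul, map_smul, hrα, rootReflection_apply_self, hfix z hz,
    rootReflection_apply_eq_self_iff.mpr hz]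

theorem rootReflection_apply_eq_neg (hα : ‖α‖ = 1) {β : E} (hβ : ‖β‖ = 1)
    (h : rootReflection α β = -β) : β = α ∨ β = -α := by
  rw [rootReflection_apply hα] at h
  have hβα : β = ⟪α, β⟫ • α := by
    apply smul_right_injective E (two_ne_zero : (2 : ℝ) ≠ 0)
    simp only [smul_smul]
    linear_combination (norm := module) h
  have hnorm : |⟪α, β⟫| = 1 := by
    simpa [hα, hβ, norm_smul] using congrArg norm hβα.symm
  rcases abs_eq zero_le_one |>.mp hnorm with h1 | h1
  · left; rw [hβα, h1, one_smul]
  · right; rw [hβα, h1, neg_one_smul]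

end rootReflection

theorem IsReflection.exists_eq_rootReflection {r : E ≃ₗᵢ[ℝ] E} (hr : IsReflection r) :
    ∃ α : E, ‖α‖ = 1 ∧ r = rootReflection α := by
  obtain ⟨a, ha0, hra, hfix⟩ := hr
  have ha : ‖a‖ ≠ 0 := norm_ne_zero_iff.mpr ha0
  refine ⟨‖a‖⁻¹ • a, by rw [norm_smul, norm_inv, norm_norm, inv_mul_cancel₀ ha], ?_⟩
  rw [rootReflection_smul (inv_ne_zero ha)]
  exact eq_rootReflection_of_apply hra hfix

/-! ### Isometries and orthogonal complements -/

theorem apply_mem_orthogonal {g : E ≃ₗᵢ[ℝ] E} {U : Submodule ℝ E} (hU : ∀ u ∈ U, g⁻¹ u ∈ U)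
    {y : E} (hy : y ∈ Uᗮ) : g y ∈ Uᗮ :=
  (Submodule.mem_orthogonal U (g y)).mpr fun u hu => by
    rw [← (Submodule.mem_orthogonal U y).mp hy _ (hU u hu)]
    simp [LinearIsometryEquiv.inner_map_eq_flip]

theorem inv_apply_eq_self {g : E ≃ₗᵢ[ℝ] E} {u : E} (h : g u = u) : g⁻¹ u = u :=
  g.symm_apply_eq.mpr h.symm

theorem commute_of_forall_apply_eq (X : Submodule ℝ E) [X.HasOrthogonalProjection]
    {p q : E ≃ₗᵢ[ℝ] E} (hp : ∀ x ∈ X, p x = x) (hq : ∀ y ∈ Xᗮ, q y = y) : Commute p q := by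
  have hqX : ∀ x ∈ X, q x ∈ X := fun x hx => X.orthogonal_orthogonal ▸
    apply_mem_orthogonal (fun y hy => (inv_apply_eq_self (hq y hy)).symm ▸ hy)
      (X.le_orthogonal_orthogonal hx)
  have hpXp : ∀ y ∈ Xᗮ, p y ∈ Xᗮ := fun y hy =>
    apply_mem_orthogonal (fun x hx => (inv_apply_eq_self (hp x hx)).symm ▸ hx) hy
  ext z
  obtain ⟨x, hx, y, hy, rfl⟩ := X.exists_add_mem_mem_orthogonal z
  simp only [LinearIsometryEquiv.coe_mul, Function.comp_apply, map_add, hp x hx, hq y hy,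
    hp _ (hqX x hx), hq _ (hpXp y hy)]

theorem eq_one_of_forall_apply_eq (X : Submodule ℝ E) [X.HasOrthogonalProjection]
    {g : E ≃ₗᵢ[ℝ] E} (hX : ∀ x ∈ X, g x = x) (hXp : ∀ y ∈ Xᗮ, g y = y) : g = 1 := by
  ext z
  obtain ⟨x, hx, y, hy, rfl⟩ := X.exists_add_mem_mem_orthogonal z
  rw [map_add, hX x hx, hXp y hy, LinearIsometryEquiv.coe_one, id]

theorem Submodule.exists_mem_forall_inner_ne_zero (U : Submodule ℝ E) {Γ : Set E}
    (hΓ : Γ.Finite) (hΓU : ∀ γ ∈ Γ, γ ∉ Uᗮ) : ∃ z ∈ U, ∀ γ ∈ Γ, ⟪γ, z⟫ ≠ 0 := by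
  by_contra! hcover
  have : Finite Γ := hΓ.to_subtype
  obtain ⟨γ, hγ⟩ := Subspace.exists_eq_top_of_iUnion_eq_univ
    (p := fun γ : Γ => (ℝ ∙ (γ : E))ᗮ.comap U.subtype) <| Set.eq_univ_of_forall fun z => by
      obtain ⟨γ, hγΓ, hγz⟩ := hcover z z.2
      exact Set.mem_iUnion.mpr
        ⟨⟨γ, hγΓ⟩, Submodule.mem_orthogonal_singleton_iff_inner_right.mpr hγz⟩
  refine hΓU γ γ.2 ((Submodule.mem_orthogonal' U γ).mpr fun u hu => ?_)
  exact Submodule.mem_orthogonal_singleton_iff_inner_right.mp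
    (show (⟨u, hu⟩ : U) ∈ (ℝ ∙ (γ : E))ᗮ.comap U.subtype from hγ ▸ Submodule.mem_top)

/-! ### Roots -/

def roots (G : Subgroup (E ≃ₗᵢ[ℝ] E)) : Set E := {α | ‖α‖ = 1 ∧ rootReflection α ∈ G}

section roots

variable {G : Subgroup (E ≃ₗᵢ[ℝ] E)} {α : E}

theorem neg_mem_roots (hα : α ∈ roots G) : -α ∈ roots G :=
  ⟨by rw [norm_neg, hα.1], by rw [rootReflection_neg]; exact hα.2⟩

theorem apply_mem_roots {g : E ≃ₗᵢ[ℝ] E} (hg : g ∈ G) (hα : α ∈ roots G) : g α ∈ roots G :=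
  ⟨by rw [g.norm_map, hα.1], mul_rootReflection_mul_inv g hα.1 ▸
    G.mul_mem (G.mul_mem hg hα.2) (G.inv_mem hg)⟩

theorem exists_mem_roots_of_isReflection {r : E ≃ₗᵢ[ℝ] E} (hrG : r ∈ G) (hr : IsReflection r) :
    ∃ α ∈ roots G, rootReflection α = r := by
  obtain ⟨α, hα, rfl⟩ := hr.exists_eq_rootReflection
  exact ⟨α, ⟨hα, hrG⟩, rfl⟩

theorem roots_finite (hG : (G : Set (E ≃ₗᵢ[ℝ] E)).Finite) : (roots G).Finite := by
  have hfiber : ∀ r, {α : E | ‖α‖ = 1 ∧ rootReflection α = r}.Finite := by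
    intro r
    rcases Set.eq_empty_or_nonempty {α : E | ‖α‖ = 1 ∧ rootReflection α = r} with h | ⟨α, hα, rfl⟩
    · rw [h]; exact Set.finite_empty
    refine (Set.toFinite {α, -α}).subset fun β ⟨hβ, hβα⟩ => ?_
    exact rootReflection_apply_eq_neg hα hβ (by rw [← hβα, rootReflection_apply_self])
  exact (hG.biUnion fun r _ => hfiber r).subset fun α hα => Set.mem_biUnion hα.2 ⟨hα.1, rfl⟩

/-- A point `g u` of the orbit of `u` closest to `t` cannot be moved closer by a reflection. -/
theorem exists_mem_forall_roots_inner_mul_nonneg (hG : (G : Set (E ≃ₗᵢ[ℝ] E)).Finite)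
    (u t : E) : ∃ g ∈ G, ∀ α ∈ roots G, 0 ≤ ⟪α, g u⟫ * ⟪α, t⟫ := by
  obtain ⟨g, hg, hmax⟩ := Set.exists_max_image _ (fun g => ⟪g u, t⟫) hG ⟨1, G.one_mem⟩
  refine ⟨g, hg, fun α hα => ?_⟩
  have := hmax _ (G.mul_mem hα.2 hg)
  simp only [LinearIsometryEquiv.coe_mul, Function.comp_apply, rootReflection_apply hα.1,
    inner_sub_left, real_inner_smul_left] at this
  linarith

end roots

theorem le_closure_rootReflection_roots {W : Subgroup (E ≃ₗᵢ[ℝ] E)}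
    (hWgen : W = Subgroup.closure {r : E ≃ₗᵢ[ℝ] E | r ∈ W ∧ IsReflection r}) :
    W ≤ Subgroup.closure (rootReflection '' roots W) := by
  intro w hw
  rw [hWgen] at hw
  refine (Subgroup.closure_le _).mpr ?_ hw
  rintro r ⟨hrW, hr⟩
  obtain ⟨α, hα, rfl⟩ := exists_mem_roots_of_isReflection hrW hr
  exact Subgroup.subset_closure ⟨α, hα, rfl⟩

theorem conj_mem_closure_rootReflection {Φ Ψ : Set E} (g : E ≃ₗᵢ[ℝ] E) {w : E ≃ₗᵢ[ℝ] E}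
    (hw : w ∈ Subgroup.closure (rootReflection '' Φ)) (hΦ : ∀ α ∈ Φ, ‖α‖ = 1 ∧ g α ∈ Ψ) :
    g * w * g⁻¹ ∈ Subgroup.closure (rootReflection '' Ψ) := by
  have hmap := Subgroup.mem_map_of_mem (MulAut.conj g).toMonoidHom hw
  rw [MonoidHom.map_closure, ← Set.image_comp] at hmap
  refine Subgroup.closure_mono ?_ hmap
  rintro _ ⟨α, hα, rfl⟩
  exact ⟨g α, (hΦ α hα).2, (mul_rootReflection_mul_inv g (hΦ α hα).1).symm⟩

theorem exists_list_of_mem_closure_rootReflection {Δ : Set E} {w : E ≃ₗᵢ[ℝ] E}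
    (hw : w ∈ Subgroup.closure (rootReflection '' Δ)) :
    ∃ l : List E, (∀ γ ∈ l, γ ∈ Δ) ∧ (l.map rootReflection).prod = w := by
  induction hw using Subgroup.closure_induction_left with
  | one => exact ⟨[], by simp, rfl⟩
  | mul_left _ hx _ _ ih =>
    obtain ⟨γ, hγ, rfl⟩ := hx
    obtain ⟨l, hl, rfl⟩ := ih
    exact ⟨γ :: l, List.forall_mem_cons.mpr ⟨hγ, hl⟩, rfl⟩
  | inv_mul_cancel _ hx _ _ ih =>
    obtain ⟨γ, hγ, rfl⟩ := hx
    obtain ⟨l, hl, rfl⟩ := ih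
    exact ⟨γ :: l, List.forall_mem_cons.mpr ⟨hγ, hl⟩, by simp [rootReflection_inv]⟩

/-! ### Simple systems -/

theorem inner_nonneg_of_mem_hull {S : Set E} {v : E} (hS : ∀ s ∈ S, 0 ≤ ⟪s, v⟫) {x : E}
    (hx : x ∈ PointedCone.hull ℝ S) : 0 ≤ ⟪x, v⟫ := by
  induction hx using Submodule.span_induction with
  | mem s hs => exact hS s hs
  | zero => simp
  | add x y _ _ hx hy => rw [inner_add_left]; positivity
  | smul a x _ hx =>
    rw [Nonneg.mk_smul, real_inner_smul_left]
    exact mul_nonneg a.2 hx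

theorem eq_zero_or_inner_pos_of_mem_hull {S : Set E} {v : E} (hS : ∀ s ∈ S, 0 < ⟪s, v⟫) {x : E}
    (hx : x ∈ PointedCone.hull ℝ S) : x = 0 ∨ 0 < ⟪x, v⟫ := by
  induction hx using Submodule.span_induction with
  | mem s hs => exact .inr (hS s hs)
  | zero => exact .inl rfl
  | add x y _ _ hx hy =>
    rcases hx with rfl | hx
    · rwa [zero_add]
    rcases hy with rfl | hy
    · rw [add_zero]; exact .inr hx
    · rw [inner_add_left]; exact .inr (by positivity)
  | smul a x _ hx =>
    obtain ⟨a, ha⟩ := a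
    rcases hx with rfl | hx
    · exact .inl (smul_zero _)
    rcases ha.eq_or_lt with rfl | ha
    · exact .inl (zero_smul _ x)
    · rw [Nonneg.mk_smul, real_inner_smul_left]
      exact .inr (by positivity)

/-- Simple roots are characterized by cone-minimality (none lies in the cone of the others) instead
of linear independence. -/
structure SimpleSystem (W : Subgroup (E ≃ₗᵢ[ℝ] E)) (v : E) where
  positive : Finset E
  simple : Finset E
  inner_ne_zero : ∀ α ∈ roots W, ⟪α, v⟫ ≠ 0
  mem_positive_iff {β : E} : β ∈ positive ↔ β ∈ roots W ∧ 0 < ⟪β, v⟫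
  simple_subset : simple ⊆ positive
  mem_hull_simple {β : E} : β ∈ positive → β ∈ PointedCone.hull ℝ (simple : Set E)
  notMem_hull_diff {α : E} : α ∈ simple → α ∉ PointedCone.hull ℝ ((simple : Set E) \ {α})

namespace SimpleSystem

variable {W : Subgroup (E ≃ₗᵢ[ℝ] E)} {v : E}

theorem nonempty (hWfin : (W : Set (E ≃ₗᵢ[ℝ] E)).Finite) (hv : ∀ α ∈ roots W, ⟪α, v⟫ ≠ 0) :
    Nonempty (SimpleSystem W v) := by
  classical
  set Φ : Finset E := (roots_finite hWfin).toFinset.filter (0 < ⟪·, v⟫)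
  set spanning : Finset (Finset E) :=
    Φ.powerset.filter fun T => ∀ β ∈ Φ, β ∈ PointedCone.hull ℝ (T : Set E)
  obtain ⟨Δ, hΔ, hmin⟩ := spanning.exists_min_image Finset.card
    ⟨Φ, Finset.mem_filter.mpr ⟨Finset.mem_powerset_self Φ, fun β hβ => Submodule.subset_span hβ⟩⟩
  obtain ⟨hΔΦ, hΔ⟩ := Finset.mem_filter.mp hΔ
  refine ⟨⟨Φ, Δ, hv, by simp [Φ], Finset.mem_powerset.mp hΔΦ, hΔ _, fun {α} hα hhull => ?_⟩⟩
  have herase : Δ.erase α ∈ spanning := by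
    refine Finset.mem_filter.mpr ⟨Finset.mem_powerset.mpr
      ((Finset.erase_subset α Δ).trans (Finset.mem_powerset.mp hΔΦ)), fun β hβ => ?_⟩
    have hsame := Submodule.span_insert_eq_span hhull
    rw [Set.insert_sdiff_singleton, Set.insert_eq_of_mem (Finset.mem_coe.mpr hα)] at hsame
    rw [Finset.coe_erase]
    exact hsame.le (hΔ β hβ)
  exact (Finset.card_erase_lt_of_mem hα).not_ge (hmin _ herase)

variable (S : SimpleSystem W v) {α β : E}

theorem mem_roots (hβ : β ∈ S.positive) : β ∈ roots W := (S.mem_positive_iff.mp hβ).1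

theorem inner_pos (hβ : β ∈ S.positive) : 0 < ⟪β, v⟫ := (S.mem_positive_iff.mp hβ).2

theorem neg_mem_positive (hβ : β ∈ roots W) (hβv : ⟪β, v⟫ ≤ 0) : -β ∈ S.positive :=
  S.mem_positive_iff.mpr ⟨neg_mem_roots hβ,
    by rw [inner_neg_left]; exact neg_pos.mpr (hβv.lt_of_ne (S.inner_ne_zero β hβ))⟩

theorem exists_eq_smul_add (hα : α ∈ S.simple) (hβ : β ∈ S.positive) :
    ∃ a : ℝ, 0 ≤ a ∧ ∃ z ∈ PointedCone.hull ℝ ((S.simple : Set E) \ {α}), β = a • α + z := by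
  have := S.mem_hull_simple hβ
  rw [← Set.insert_eq_of_mem (Finset.mem_coe.mpr hα), ← Set.insert_sdiff_singleton,
    Submodule.mem_span_insert] at this
  obtain ⟨⟨a, ha⟩, z, hz, rfl⟩ := this
  exact ⟨a, ha, z, hz, by rw [Nonneg.mk_smul]⟩

theorem rootReflection_apply_mem_positive (hα : α ∈ S.simple) (hβ : β ∈ S.positive)
    (hβα : β ≠ α) : rootReflection α β ∈ S.positive := by
  have hαW := S.mem_roots (S.simple_subset hα)
  have hsβ := apply_mem_roots hαW.2 (S.mem_roots hβ)
  by_contra hneg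
  have hγ : -rootReflection α β ∈ S.positive :=
    S.neg_mem_positive hsβ (not_lt.mp fun h => hneg (S.mem_positive_iff.mpr ⟨hsβ, h⟩))
  have hsum : β + -rootReflection α β = (2 * ⟪α, β⟫) • α := by
    rw [rootReflection_apply hαW.1]; abel
  obtain ⟨a, ha, β', hβ', hβeq⟩ := S.exists_eq_smul_add hα hβ
  obtain ⟨b, -, γ', hγ', hγeq⟩ := S.exists_eq_smul_add hα hγ
  set t := 2 * ⟪α, β⟫ - a - b
  have hβγ' : β' + γ' = t • α := by
    linear_combination (norm := module) hsum - hβeq - hγeq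
  have hpos : ∀ δ ∈ (S.simple : Set E) \ {α}, 0 < ⟪δ, v⟫ :=
    fun δ hδ => S.inner_pos (S.simple_subset hδ.1)
  rcases lt_or_ge 0 t with ht | ht
  · -- otherwise `α` would lie in the cone of the other simple roots
    refine S.notMem_hull_diff hα ?_
    have := Submodule.smul_mem _ (⟨t⁻¹, inv_nonneg.mpr ht.le⟩ : {c : ℝ // 0 ≤ c})
      (Submodule.add_mem _ hβ' hγ')
    rwa [hβγ', Nonneg.mk_smul, smul_smul, inv_mul_cancel₀ ht.ne', one_smul] at this
  rcases eq_zero_or_inner_pos_of_mem_hull hpos hβ' with rfl | hβ'v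
  · rw [add_zero] at hβeq
    have hnorm := congrArg norm hβeq
    rw [(S.mem_roots hβ).1, norm_smul, hαW.1, mul_one, Real.norm_of_nonneg ha] at hnorm
    exact hβα (by rw [hβeq, ← hnorm, one_smul])
  · have h := congrArg (⟪·, v⟫) hβγ'
    simp only [inner_add_left, real_inner_smul_left] at h
    nlinarith [inner_nonneg_of_mem_hull (fun δ hδ => (hpos δ hδ).le) hγ',
      S.inner_pos (S.simple_subset hα)]

theorem rootReflection_mem_closure_simple (hβ : β ∈ S.positive) :
    rootReflection β ∈ Subgroup.closure (rootReflection '' (S.simple : Set E)) := by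
  classical
  set K := Subgroup.closure (rootReflection '' (S.simple : Set E))
  by_contra hβK
  -- a counterexample `β` of minimal height `⟪β, v⟫`
  obtain ⟨β, hβ', hmin⟩ := (S.positive.filter fun β => rootReflection β ∉ K).exists_min_image
    (⟪·, v⟫) ⟨β, Finset.mem_filter.mpr ⟨hβ, hβK⟩⟩
  obtain ⟨hβ, hβK⟩ := Finset.mem_filter.mp hβ'
  obtain ⟨α, hα, hαβ⟩ : ∃ α ∈ S.simple, 0 < ⟪α, β⟫ := by
    by_contra! h
    have := inner_nonneg_of_mem_hull (v := -β)
      (fun α hα => by rw [inner_neg_right]; linarith [h α hα]) (S.mem_hull_simple hβ)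
    rw [inner_neg_right, real_inner_self_eq_norm_sq, (S.mem_roots hβ).1] at this
    norm_num at this
  have hαW := S.mem_roots (S.simple_subset hα)
  have hαK : rootReflection α ∈ K := Subgroup.subset_closure ⟨α, hα, rfl⟩
  have hβα : β ≠ α := by rintro rfl; exact hβK hαK
  have hγ := S.rootReflection_apply_mem_positive hα hβ hβα
  have hγK : rootReflection (rootReflection α β) ∈ K := by
    by_contra hγK
    refine (hmin _ (Finset.mem_filter.mpr ⟨hγ, hγK⟩)).not_gt ?_
    simp only [rootReflection_apply hαW.1, inner_sub_left, real_inner_smul_left]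
    nlinarith [S.inner_pos (S.simple_subset hα)]
  have hconj := mul_rootReflection_mul_inv (rootReflection α) (S.mem_roots hγ).1
  rw [rootReflection_rootReflection] at hconj
  exact hβK (hconj ▸ K.mul_mem (K.mul_mem hαK hγK) (K.inv_mem hαK))

theorem le_closure_simple (hWgen : W ≤ Subgroup.closure (rootReflection '' roots W)) :
    W ≤ Subgroup.closure (rootReflection '' (S.simple : Set E)) := by
  refine hWgen.trans ((Subgroup.closure_le _).mpr ?_)
  rintro _ ⟨α, hα, rfl⟩
  rcases le_or_gt ⟪α, v⟫ 0 with h | h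
  · rw [← rootReflection_neg]
    exact S.rootReflection_mem_closure_simple (S.neg_mem_positive hα h)
  · exact S.rootReflection_mem_closure_simple (S.mem_positive_iff.mpr ⟨hα, h⟩)

/-- The exchange condition. -/
theorem exists_list_prod_eq_mul (l : List E) (hl : ∀ γ ∈ l, γ ∈ S.simple) (hα : α ∈ S.simple)
    (hneg : ⟪(l.map rootReflection).prod α, v⟫ < 0) :
    ∃ l' : List E, (∀ γ ∈ l', γ ∈ S.simple) ∧ l'.length + 1 = l.length ∧
      (l'.map rootReflection).prod = (l.map rootReflection).prod * rootReflection α := by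
  induction l with
  | nil =>
    simp only [List.map_nil, List.prod_nil, LinearIsometryEquiv.coe_one, id] at hneg
    linarith [S.inner_pos (S.simple_subset hα)]
  | cons γ t ih =>
    obtain ⟨hγ, ht⟩ := List.forall_mem_cons.mp hl
    set u := (t.map rootReflection).prod
    have huW : u ∈ W := list_prod_mem fun r hr => by
      obtain ⟨δ, hδ, rfl⟩ := List.mem_map.mp hr
      exact (S.mem_roots (S.simple_subset (ht δ hδ))).2
    rcases lt_or_ge ⟪u α, v⟫ 0 with hu | hu
    · obtain ⟨t', ht', hlen, hprod⟩ := ih ht hu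
      exact ⟨γ :: t', List.forall_mem_cons.mpr ⟨hγ, ht'⟩, by simp [← hlen],
        by simp [hprod, u, mul_assoc]⟩
    -- `u α` is a positive root made negative by the simple reflection in `γ`, so `u α = γ`
    have huα : u α = γ := by
      by_contra hne
      have huαW := apply_mem_roots huW (S.mem_roots (S.simple_subset hα))
      have huα := S.mem_positive_iff.mpr ⟨huαW, hu.lt_of_ne' (S.inner_ne_zero _ huαW)⟩
      have := S.inner_pos (S.rootReflection_apply_mem_positive hγ huα hne)
      simp only [List.map_cons, List.prod_cons, LinearIsometryEquiv.coe_mul,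
        Function.comp_apply] at hneg
      linarith
    refine ⟨t, ht, rfl, ?_⟩
    rw [List.map_cons, List.prod_cons, ← huα, ← mul_rootReflection_mul_inv u
      (S.mem_roots (S.simple_subset hα)).1]
    simp only [u, mul_assoc, inv_mul_cancel_left, rootReflection_mul_self, mul_one]

theorem exists_simple_inner_neg (hWgen : W ≤ Subgroup.closure (rootReflection '' roots W))
    {w : E ≃ₗᵢ[ℝ] E} (hw : w ∈ W) (hw1 : w ≠ 1) : ∃ α ∈ S.simple, ⟪w α, v⟫ < 0 := by
  obtain ⟨l, hl, hprod⟩ := exists_list_of_mem_closure_rootReflection (S.le_closure_simple hWgen hw)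
  -- if the last letter `α` of a word for `w` is not sent to a negative root, the exchange
  -- condition yields a shorter word
  induction hn : l.length using Nat.strong_induction_on generalizing l with
  | _ n ih =>
  obtain ⟨t, α, rfl⟩ :=
    (List.eq_nil_or_concat' l).resolve_left (by rintro rfl; exact hw1 hprod.symm)
  have hα : α ∈ S.simple := hl α (by simp)
  rcases lt_or_ge ⟪w α, v⟫ 0 with hwα | hwα
  · exact ⟨α, hα, hwα⟩
  have hαW := S.mem_roots (S.simple_subset hα)
  have hwα' := S.inner_ne_zero _ (apply_mem_roots hw hαW)
  simp only [List.map_append, List.map_cons, List.map_nil, List.prod_append, List.prod_cons,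
    List.prod_nil, mul_one] at hprod
  subst hprod
  set u := (t.map rootReflection).prod
  have hu : ⟪u α, v⟫ < 0 := by
    simp only [LinearIsometryEquiv.coe_mul, Function.comp_apply, rootReflection_apply_self,
      map_neg, inner_neg_left] at hwα hwα'
    exact lt_of_le_of_ne (by linarith) (by simpa using hwα')
  obtain ⟨t', ht', hlen, hprod⟩ := S.exists_list_prod_eq_mul t
    (fun γ hγ => hl γ (by simp [hγ])) hα hu
  rw [List.length_append, List.length_singleton] at hn
  exact ih t'.length (by omega) t' ht' hprod rfl

noncomputable def inversions (w : E ≃ₗᵢ[ℝ] E) : Finset E := S.positive.filter fun β => ⟪w β, v⟫ < 0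

theorem card_inversions_mul_lt {w : E ≃ₗᵢ[ℝ] E} (hα : α ∈ S.simple) (hwα : ⟪w α, v⟫ < 0) :
    (S.inversions (w * rootReflection α)).card < (S.inversions w).card := by
  classical
  have hsub : S.inversions (w * rootReflection α) ⊆
      ((S.inversions w).erase α).image (rootReflection α) := by
    intro β hβ
    obtain ⟨hβ, hwβ⟩ := Finset.mem_filter.mp hβ
    simp only [LinearIsometryEquiv.coe_mul, Function.comp_apply] at hwβ
    have hβα : β ≠ α := by
      rintro rfl
      rw [rootReflection_apply_self, map_neg, inner_neg_left] at hwβ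
      linarith
    have hγ := S.rootReflection_apply_mem_positive hα hβ hβα
    have hγα : rootReflection α β ≠ α := fun h => by
      have := S.inner_pos hβ
      rw [← rootReflection_rootReflection α β, h, rootReflection_apply_self, inner_neg_left] at this
      linarith [S.inner_pos (S.simple_subset hα)]
    exact Finset.mem_image.mpr ⟨rootReflection α β,
      Finset.mem_erase.mpr ⟨hγα, Finset.mem_filter.mpr ⟨hγ, hwβ⟩⟩,
      rootReflection_rootReflection α β⟩
  calc (S.inversions (w * rootReflection α)).card
      ≤ (((S.inversions w).erase α).image (rootReflection α)).card := Finset.card_le_card hsub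
    _ ≤ ((S.inversions w).erase α).card := Finset.card_image_le
    _ < (S.inversions w).card :=
      Finset.card_erase_lt_of_mem (Finset.mem_filter.mpr ⟨S.simple_subset hα, hwα⟩)

theorem mem_closure_of_inner_nonneg (hWgen : W ≤ Subgroup.closure (rootReflection '' roots W))
    {x : E} (hx : ∀ β ∈ S.positive, 0 ≤ ⟪β, x⟫) {w : E ≃ₗᵢ[ℝ] E} (hw : w ∈ W) (hwx : w x = x) :
    w ∈ Subgroup.closure (rootReflection '' {α | α ∈ roots W ∧ ⟪α, x⟫ = 0}) := by
  induction hn : (S.inversions w).card using Nat.strong_induction_on generalizing w with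
  | _ n ih =>
  rcases eq_or_ne w 1 with rfl | hw1
  · exact Subgroup.one_mem _
  obtain ⟨α, hα, hwα⟩ := S.exists_simple_inner_neg hWgen hw hw1
  have hαW := S.mem_roots (S.simple_subset hα)
  -- `x` is on the closed positive side of both `α` and `-w α`, while `⟪w α, x⟫ = ⟪α, x⟫`
  have hαx : ⟪α, x⟫ = 0 := by
    have h1 := hx α (S.simple_subset hα)
    have h2 := hx _ (S.neg_mem_positive (apply_mem_roots hw hαW) hwα.le)
    have h3 : ⟪w α, x⟫ = ⟪α, x⟫ := by rw [← w.inner_map_map α x, hwx]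
    rw [inner_neg_left, h3] at h2
    linarith
  have hsx : rootReflection α x = x := rootReflection_apply_eq_self_iff.mpr hαx
  have hrest := ih _ (hn ▸ S.card_inversions_mul_lt hα hwα) (W.mul_mem hw hαW.2)
    (by simp [hsx, hwx]) rfl
  simpa [mul_assoc, rootReflection_mul_self] using
    Subgroup.mul_mem _ hrest (Subgroup.subset_closure ⟨α, ⟨hαW, hαx⟩, rfl⟩)

end SimpleSystem

/-! ### Steinberg's theorem -/

section Steinberg

variable {W : Subgroup (E ≃ₗᵢ[ℝ] E)}

theorem mem_closure_rootReflection_of_apply_eq (hWfin : (W : Set (E ≃ₗᵢ[ℝ] E)).Finite)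
    (hWgen : W ≤ Subgroup.closure (rootReflection '' roots W)) {x : E} {w : E ≃ₗᵢ[ℝ] E} (hw : w ∈ W)
    (hwx : w x = x) :
    w ∈ Subgroup.closure (rootReflection '' {α | α ∈ roots W ∧ ⟪α, x⟫ = 0}) := by
  obtain ⟨v, -, hv⟩ := (⊤ : Submodule ℝ E).exists_mem_forall_inner_ne_zero (roots_finite hWfin)
    fun α hα => by
      rw [Submodule.top_orthogonal_eq_bot, Submodule.mem_bot]
      exact norm_ne_zero_iff.mp (hα.1 ▸ one_ne_zero)
  obtain ⟨S⟩ := SimpleSystem.nonempty hWfin hv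
  -- move `x` by `g ∈ W` into the closed positive chamber
  obtain ⟨g, hg, hgx⟩ := exists_mem_forall_roots_inner_mul_nonneg hWfin x v
  have hconj := S.mem_closure_of_inner_nonneg hWgen
    (fun β hβ => nonneg_of_mul_nonneg_left (hgx β (S.mem_roots hβ)) (S.inner_pos hβ))
    (W.mul_mem (W.mul_mem hg hw) (W.inv_mem hg)) (by simp [hwx])
  rw [show w = g⁻¹ * (g * w * g⁻¹) * g⁻¹⁻¹ by group]
  refine conj_mem_closure_rootReflection g⁻¹ hconj fun α hα =>
    ⟨hα.1.1, apply_mem_roots (W.inv_mem hg) hα.1, ?_⟩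
  rw [← hα.2, ← g.inner_map_map]
  simp

theorem mem_closure_rootReflection_of_forall_apply_eq (hWfin : (W : Set (E ≃ₗᵢ[ℝ] E)).Finite)
    (hWgen : W ≤ Subgroup.closure (rootReflection '' roots W)) (U : Submodule ℝ E) {w : E ≃ₗᵢ[ℝ] E}
    (hw : w ∈ W) (hwU : ∀ u ∈ U, w u = u) :
    w ∈ Subgroup.closure (rootReflection '' (roots W ∩ Uᗮ)) := by
  obtain ⟨z, hzU, hz⟩ := U.exists_mem_forall_inner_ne_zero
    ((roots_finite hWfin).sdiff (t := Uᗮ)) fun γ hγ => hγ.2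
  refine Subgroup.closure_mono (Set.image_mono ?_)
    (mem_closure_rootReflection_of_apply_eq hWfin hWgen hw (hwU z hzU))
  rintro α ⟨hα, hαz⟩
  exact ⟨hα, by_contra fun hαU => hz α ⟨hα, hαU⟩ hαz⟩

end Steinberg

/-! ### Chambers -/

def setStabilizer (s : Set E) : Subgroup (E ≃ₗᵢ[ℝ] E) where
  carrier := {g | g '' s = s}
  one_mem' := by simp
  mul_mem' {a b} ha hb := by
    simp only [Set.mem_ofPred_eq, LinearIsometryEquiv.coe_mul, Set.image_comp] at ha hb ⊢
    rw [hb, ha]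
  inv_mem' {a} ha := by
    simp only [Set.mem_ofPred_eq] at ha ⊢
    conv_lhs => rw [← ha]
    simp [← Set.image_comp]

/-- The open chamber of the hyperplanes `γᗮ`, `γ ∈ Φ`, that contains `x`; it is empty when `x` lies
on one of them. -/
def chamber (Φ : Set E) (x : E) : Set E := {y | ∀ γ ∈ Φ, 0 < ⟪γ, y⟫ * ⟪γ, x⟫}

section chamber

variable {Φ : Set E} {x : E}

theorem self_mem_chamber_iff : x ∈ chamber Φ x ↔ ∀ γ ∈ Φ, ⟪γ, x⟫ ≠ 0 :=
  forall₂_congr fun _ _ => mul_self_pos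

theorem sum_mem_chamber {ι : Type*} {s : Finset ι} (hs : s.Nonempty) {f : ι → E}
    (hf : ∀ i ∈ s, f i ∈ chamber Φ x) : ∑ i ∈ s, f i ∈ chamber Φ x := fun γ hγ => by
  rw [inner_sum, Finset.sum_mul]
  exact Finset.sum_pos (fun i hi => hf i hi γ hγ) hs

theorem apply_mem_chamber {g : E ≃ₗᵢ[ℝ] E} (hg : Set.MapsTo ⇑g⁻¹ Φ Φ)
    (hgx : g x ∈ chamber Φ x) {y : E} (hy : y ∈ chamber Φ x) : g y ∈ chamber Φ x := by
  intro γ hγ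
  have hadj : ∀ z, ⟪γ, g z⟫ = ⟪g⁻¹ γ, z⟫ := fun z => by
    simp [LinearIsometryEquiv.inner_map_eq_flip]
  have h1 := hy _ (hg hγ)
  have h2 := hgx γ hγ
  rw [hadj] at h2 ⊢
  -- `⟪g⁻¹ γ, y⟫`, `⟪g⁻¹ γ, x⟫` and `⟪γ, x⟫` all have the same sign
  nlinarith [mul_pos h1 h2, sq_nonneg ⟪g⁻¹ γ, x⟫, mul_self_nonneg (⟪g⁻¹ γ, y⟫ * ⟪γ, x⟫)]

theorem mem_setStabilizer_chamber_iff {g : E ≃ₗᵢ[ℝ] E} (hg : Set.MapsTo g Φ Φ)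
    (hg' : Set.MapsTo ⇑g⁻¹ Φ Φ) (hx : x ∈ chamber Φ x) :
    g ∈ setStabilizer (chamber Φ x) ↔ g x ∈ chamber Φ x := by
  refine ⟨fun hgC => hgC ▸ Set.mem_image_of_mem g hx, fun hgx => ?_⟩
  have hginvx : g⁻¹ x ∈ chamber Φ x := fun γ hγ => by
    have := hgx (g γ) (hg hγ)
    rw [g.inner_map_map] at this
    rwa [show ⟪γ, g⁻¹ x⟫ = ⟪g γ, x⟫ by simp [LinearIsometryEquiv.inner_map_eq_flip], mul_comm]
  refine Set.Subset.antisymm (Set.image_subset_iff.mpr fun y hy => apply_mem_chamber hg' hgx hy)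
    fun y hy => ⟨g⁻¹ y, apply_mem_chamber (by rwa [inv_inv]) hginvx hy, by simp⟩

end chamber

theorem exists_mem_self_mem_chamber_roots_inter {W : Subgroup (E ≃ₗᵢ[ℝ] E)}
    (hWfin : (W : Set (E ≃ₗᵢ[ℝ] E)).Finite) (U : Submodule ℝ E) :
    ∃ x ∈ U, x ∈ chamber (roots W ∩ U) x := by
  obtain ⟨x, hxU, hx⟩ := U.exists_mem_forall_inner_ne_zero
    ((roots_finite hWfin).subset Set.inter_subset_left) fun γ hγ hγU => by
      have hγ0 : γ = 0 := (Submodule.mem_bot ℝ).mp (U.inf_orthogonal_eq_bot ▸ ⟨hγ.2, hγU⟩)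
      simpa [hγ0] using hγ.1.1
  exact ⟨x, hxU, self_mem_chamber_iff.mpr hx⟩

theorem apply_sum_range_orderOf_pow (g : E ≃ₗᵢ[ℝ] E) (x : E) :
    g (∑ m ∈ Finset.range (orderOf g), (g ^ m) x) = ∑ m ∈ Finset.range (orderOf g), (g ^ m) x := by
  have hstep : ∀ m, g ((g ^ m) x) = (g ^ (m + 1)) x := fun m => by
    rw [pow_succ', LinearIsometryEquiv.coe_mul, Function.comp_apply]
  rw [map_sum]
  simp_rw [hstep]
  rcases Nat.eq_zero_or_pos (orderOf g) with h | h
  · rw [h]; rfl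
  obtain ⟨k, hk⟩ : ∃ k, orderOf g = k + 1 := ⟨_, (Nat.succ_pred_eq_of_pos h).symm⟩
  rw [hk, Finset.sum_range_succ, Finset.sum_range_succ', ← hk, pow_orderOf_eq_one, pow_zero]

theorem eq_one_of_apply_mem_chamber {W : Subgroup (E ≃ₗᵢ[ℝ] E)}
    (hWfin : (W : Set (E ≃ₗᵢ[ℝ] E)).Finite)
    (hWgen : W ≤ Subgroup.closure (rootReflection '' roots W)) (Y : Submodule ℝ E)
    {g : E ≃ₗᵢ[ℝ] E} (hg : g ∈ W) (hgY : ∀ y ∈ Y, g y = y) {x : E}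
    (hx : x ∈ chamber (roots W ∩ Yᗮ) x) (hgx : g x ∈ chamber (roots W ∩ Yᗮ) x) : g = 1 := by
  set C := chamber (roots W ∩ Yᗮ) x
  have hmaps : ∀ h ∈ W, (∀ y ∈ Y, h y = y) → Set.MapsTo h (roots W ∩ Yᗮ) (roots W ∩ Yᗮ) :=
    fun h hh hhY α hα => ⟨apply_mem_roots hh hα.1,
      apply_mem_orthogonal (fun u hu => (inv_apply_eq_self (hhY u hu)).symm ▸ hu) hα.2⟩
  have hgC : g ∈ setStabilizer C := (mem_setStabilizer_chamber_iff (hmaps g hg hgY)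
    (hmaps _ (W.inv_mem hg) fun y hy => inv_apply_eq_self (hgY y hy)) hx).mpr hgx
  -- the sum `c` of the orbit of `x` under `g` lies in `C` and is fixed by `g`
  set c := ∑ m ∈ Finset.range (orderOf g), (g ^ m) x
  have hc : c ∈ C := by
    have : Finite W := hWfin
    have hord : IsOfFinOrder g := W.subtype.isOfFinOrder (isOfFinOrder_of_finite (⟨g, hg⟩ : W))
    refine sum_mem_chamber (Finset.nonempty_range_iff.mpr (orderOf_pos_iff.mpr hord).ne')
      fun m _ => ?_
    have hgmC : (g ^ m) '' C = C := Subgroup.pow_mem _ hgC m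
    exact hgmC.subset (Set.mem_image_of_mem _ hx)
  have hfix : ∀ u ∈ Y ⊔ ℝ ∙ c, g u = u := by
    intro u hu
    obtain ⟨y, hy, z, hz, rfl⟩ := Submodule.mem_sup.mp hu
    obtain ⟨t, rfl⟩ := Submodule.mem_span_singleton.mp hz
    rw [map_add, map_smul, hgY y hy, apply_sum_range_orderOf_pow]
  -- so `g` is a product of reflections whose roots are orthogonal to `Y` and to `c`: there are none
  have hempty : roots W ∩ (Y ⊔ ℝ ∙ c)ᗮ = ∅ := by
    refine Set.eq_empty_of_forall_notMem fun α ⟨hα, hαc⟩ => ?_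
    rw [← Submodule.inf_orthogonal] at hαc
    have := hc α ⟨hα, hαc.1⟩
    rw [real_inner_comm, Submodule.mem_orthogonal_singleton_iff_inner_right.mp hαc.2,
      zero_mul] at this
    exact this.false
  simpa [hempty] using mem_closure_rootReflection_of_forall_apply_eq hWfin hWgen _ hg hfix

/-! ### Normalizers of parabolic subgroups -/

theorem pointwiseStabilizer_fixedSubmodule (W : Subgroup (E ≃ₗᵢ[ℝ] E)) (s : Set E) :
    pointwiseStabilizer W (fixedSubmodule (pointwiseStabilizer W s)) = pointwiseStabilizer W s :=
  le_antisymm (fun _ hg => ⟨hg.1, fun v hv => hg.2 v fun _ hu => hu.2 v hv⟩)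
    fun g hg => ⟨hg.1, fun _ hv => hv g hg⟩

theorem apply_mem_fixedSubmodule {P : Subgroup (E ≃ₗᵢ[ℝ] E)} {n : E ≃ₗᵢ[ℝ] E}
    (hn : n ∈ Subgroup.normalizer (P : Set (E ≃ₗᵢ[ℝ] E))) {x : E} (hx : x ∈ fixedSubmodule P) :
    n x ∈ fixedSubmodule P := fun p hp => by
  have hconj : n⁻¹ * p * n ∈ P := by
    simpa using (Subgroup.mem_normalizer_iff.mp (Subgroup.inv_mem _ hn) p).mp hp
  have := congrArg n (hx _ hconj)
  simpa using this

theorem roots_inter_orthogonal_subset (W : Subgroup (E ≃ₗᵢ[ℝ] E)) (U : Submodule ℝ E) :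
    roots W ∩ Uᗮ ⊆ roots (pointwiseStabilizer W U) := fun α ⟨hα, hαU⟩ =>
  ⟨hα.1, hα.2, fun u hu => rootReflection_apply_eq_self_iff.mpr
    ((Submodule.mem_orthogonal' U α).mp hαU u hu)⟩

theorem exists_mul_apply_mem_chamber {G H : Subgroup (E ≃ₗᵢ[ℝ] E)}
    (hG : (G : Set (E ≃ₗᵢ[ℝ] E)).Finite) (hGH : G ≤ H) {Φ : Set E} (hΦG : Φ ⊆ roots G)
    (hΦH : ∀ h ∈ H, Set.MapsTo h Φ Φ) {x : E} (hx : x ∈ chamber Φ x) {n : E ≃ₗᵢ[ℝ] E}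
    (hn : n ∈ H) : ∃ g ∈ G, (g * n) x ∈ chamber Φ x := by
  obtain ⟨g, hg, hgn⟩ := exists_mem_forall_roots_inner_mul_nonneg hG (n x) x
  refine ⟨g, hg, fun γ hγ => (hgn γ (hΦG hγ)).lt_of_ne' (mul_ne_zero ?_ ?_)⟩
  · have hinv := hΦH _ (H.inv_mem (H.mul_mem (hGH hg) hn)) hγ
    rw [show ⟪γ, g (n x)⟫ = ⟪(g * n)⁻¹ γ, x⟫ by simp [LinearIsometryEquiv.inner_map_eq_flip]]
    exact self_mem_chamber_iff.mp hx _ hinv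
  · exact self_mem_chamber_iff.mp hx γ hγ

section Parabolic

variable {W : Subgroup (E ≃ₗᵢ[ℝ] E)} {X : Submodule ℝ E}

local notation "𝒫" => pointwiseStabilizer W (X : Set E)
local notation "𝒬" => pointwiseStabilizer W ((Xᗮ : Submodule ℝ E) : Set E)
local notation "𝒩" => W ⊓ Subgroup.normalizer ((𝒫 : Subgroup (E ≃ₗᵢ[ℝ] E)) : Set (E ≃ₗᵢ[ℝ] E))

theorem mapsTo_of_mem_normalizer (hX : fixedSubmodule 𝒫 = X) {n : E ≃ₗᵢ[ℝ] E} (hn : n ∈ 𝒩) :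
    Set.MapsTo n X X ∧ Set.MapsTo n Xᗮ Xᗮ := by
  have hmaps : ∀ n ∈ 𝒩, Set.MapsTo n X X := fun n hn x hx =>
    hX.le (apply_mem_fixedSubmodule hn.2 (hX.ge hx))
  exact ⟨hmaps n hn, fun y hy => apply_mem_orthogonal (fun x hx => hmaps _ (inv_mem hn) hx) hy⟩

theorem pointwiseStabilizer_orthogonal_le_normalizer [X.HasOrthogonalProjection] : 𝒬 ≤ 𝒩 :=
  fun q hq => ⟨hq.1, Subgroup.mem_normalizer_iff.mpr fun p => by
    have hcomm : ∀ p ∈ 𝒫, Commute p q := fun p hp => commute_of_forall_apply_eq X hp.2 hq.2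
    refine ⟨fun hp => ?_, fun hp => ?_⟩
    · rwa [(hcomm p hp).eq.symm, mul_inv_cancel_right]
    · have hpq : p = q * p * q⁻¹ := calc
        p = q⁻¹ * (q * p * q⁻¹ * q) := by group
        _ = q⁻¹ * (q * (q * p * q⁻¹)) := by rw [(hcomm _ hp).eq]
        _ = q * p * q⁻¹ := by group
      rw [hpq]
      exact hp⟩

theorem conj_mem_pointwiseStabilizer_orthogonal (hX : fixedSubmodule 𝒫 = X)
    {n q : E ≃ₗᵢ[ℝ] E} (hn : n ∈ 𝒩) (hq : q ∈ 𝒬) : n * q * n⁻¹ ∈ 𝒬 :=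
  ⟨W.mul_mem (W.mul_mem hn.1 hq.1) (W.inv_mem hn.1), fun y hy => by
    have := hq.2 _ ((mapsTo_of_mem_normalizer hX (inv_mem hn)).2 hy)
    simp only [LinearIsometryEquiv.coe_inv] at this
    simp [this]⟩

theorem mapsTo_roots_of_mem_normalizer (hX : fixedSubmodule 𝒫 = X) {n : E ≃ₗᵢ[ℝ] E}
    (hn : n ∈ 𝒩) : Set.MapsTo n (roots W ∩ X) (roots W ∩ X) ∧
      Set.MapsTo n (roots W ∩ Xᗮ) (roots W ∩ Xᗮ) :=
  ⟨fun _ hα => ⟨apply_mem_roots hn.1 hα.1, (mapsTo_of_mem_normalizer hX hn).1 hα.2⟩,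
    fun _ hα => ⟨apply_mem_roots hn.1 hα.1, (mapsTo_of_mem_normalizer hX hn).2 hα.2⟩⟩

variable {x₀ y₀ : E}

local notation "𝒟" => 𝒩 ⊓ (setStabilizer (chamber (roots W ∩ X) x₀) ⊓
  setStabilizer (chamber (roots W ∩ Xᗮ) y₀))

theorem mem_normalizer_inf_setStabilizer_iff (hX : fixedSubmodule 𝒫 = X)
    (hx₀ : x₀ ∈ chamber (roots W ∩ X) x₀) (hy₀ : y₀ ∈ chamber (roots W ∩ Xᗮ) y₀)
    {n : E ≃ₗᵢ[ℝ] E} (hn : n ∈ 𝒩) :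
    n ∈ 𝒟 ↔ n x₀ ∈ chamber (roots W ∩ X) x₀ ∧ n y₀ ∈ chamber (roots W ∩ Xᗮ) y₀ := by
  have hmaps := mapsTo_roots_of_mem_normalizer hX hn
  have hmaps' := mapsTo_roots_of_mem_normalizer hX (inv_mem hn)
  rw [Subgroup.mem_inf, and_iff_right hn, Subgroup.mem_inf,
    mem_setStabilizer_chamber_iff hmaps.1 hmaps'.1 hx₀,
    mem_setStabilizer_chamber_iff hmaps.2 hmaps'.2 hy₀]

theorem sup_inf_normalizer_inf_setStabilizer_eq_bot [X.HasOrthogonalProjection]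
    (hWfin : (W : Set (E ≃ₗᵢ[ℝ] E)).Finite)
    (hWgen : W ≤ Subgroup.closure (rootReflection '' roots W)) (hX : fixedSubmodule 𝒫 = X)
    (hx₀X : x₀ ∈ X) (hx₀ : x₀ ∈ chamber (roots W ∩ X) x₀) (hy₀ : y₀ ∈ chamber (roots W ∩ Xᗮ) y₀) :
    (𝒫 ⊔ 𝒬) ⊓ 𝒟 = ⊥ := by
  refine eq_bot_iff.mpr fun g ⟨hg, hgD⟩ => ?_
  obtain ⟨p, hp, q, hq, rfl⟩ := Subgroup.exists_mul_eq_of_mem_sup hg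
    fun p hp q hq => commute_of_forall_apply_eq X hp.2 hq.2
  obtain ⟨hx₀C, hy₀C⟩ := (mem_normalizer_inf_setStabilizer_iff hX hx₀ hy₀ hgD.1).mp hgD
  have hqx₀ : q x₀ ∈ X :=
    (mapsTo_of_mem_normalizer hX (pointwiseStabilizer_orthogonal_le_normalizer hq)).1 hx₀X
  simp only [LinearIsometryEquiv.coe_mul, Function.comp_apply, hp.2 _ hqx₀] at hx₀C
  have hq1 : q = 1 := by
    refine eq_one_of_apply_mem_chamber hWfin hWgen Xᗮ hq.1 hq.2 (x := x₀) ?_ ?_ <;>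
      rwa [X.orthogonal_orthogonal]
  subst hq1
  have hp1 : p = 1 :=
    eq_one_of_apply_mem_chamber hWfin hWgen X hp.1 hp.2 hy₀ (by simpa using hy₀C)
  simp [hp1]

theorem exists_mul_mem_normalizer_inf_setStabilizer [X.HasOrthogonalProjection]
    (hWfin : (W : Set (E ≃ₗᵢ[ℝ] E)).Finite) (hX : fixedSubmodule 𝒫 = X)
    (hx₀ : x₀ ∈ chamber (roots W ∩ X) x₀) (hy₀X : y₀ ∈ Xᗮ) (hy₀ : y₀ ∈ chamber (roots W ∩ Xᗮ) y₀)
    {n : E ≃ₗᵢ[ℝ] E} (hn : n ∈ 𝒩) : ∃ x ∈ 𝒫 ⊔ 𝒬, ∃ d ∈ 𝒟, n = x * d := by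
  have hPN : 𝒫 ≤ 𝒩 := fun p hp => ⟨hp.1, Subgroup.le_normalizer hp⟩
  obtain ⟨p, hp, hpn⟩ := exists_mul_apply_mem_chamber (G := 𝒫) (hWfin.subset fun _ hg => hg.1)
    hPN (roots_inter_orthogonal_subset W X)
    (fun _ hh => (mapsTo_roots_of_mem_normalizer hX hh).2) hy₀ hn
  have hpnN : p * n ∈ 𝒩 := mul_mem (hPN hp) hn
  have hrootsQ : roots W ∩ X ⊆ roots 𝒬 := by
    simpa only [X.orthogonal_orthogonal] using roots_inter_orthogonal_subset W Xᗮ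
  obtain ⟨q, hq, hqpn⟩ := exists_mul_apply_mem_chamber (G := 𝒬) (hWfin.subset fun _ hg => hg.1)
    pointwiseStabilizer_orthogonal_le_normalizer hrootsQ
    (fun _ hh => (mapsTo_roots_of_mem_normalizer hX hh).1) hx₀ hpnN
  have hd : q * (p * n) ∈ 𝒟 := by
    refine (mem_normalizer_inf_setStabilizer_iff hX hx₀ hy₀
      (mul_mem (pointwiseStabilizer_orthogonal_le_normalizer hq) hpnN)).mpr ⟨hqpn, ?_⟩
    rwa [LinearIsometryEquiv.coe_mul, Function.comp_apply,
      hq.2 _ ((mapsTo_of_mem_normalizer hX hpnN).2 hy₀X)]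
  exact ⟨p⁻¹ * q⁻¹, mul_mem (Subgroup.mem_sup_left (inv_mem hp))
    (Subgroup.mem_sup_right (inv_mem hq)), q * (p * n), hd, by group⟩

end Parabolic

end ReflectionGroups

/-- Structure of the normalizer `N = N_W(P)` of a parabolic subgroup `P`:
`Q = Z_W(Xᗮ)` is normal in `N`, `P ⊓ Q` is trivial, `P` and `Q` commute elementwise
(so `P ⊔ Q ≅ P × Q`), and `P ⊔ Q` has a complement `D` in `N`. -/
theorem normalizer_decomposition
    (W : Subgroup (V ≃ₗᵢ[ℝ] V))
    (hWfin : (W : Set (V ≃ₗᵢ[ℝ] V)).Finite)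
    (hWgen : W = Subgroup.closure {r : V ≃ₗᵢ[ℝ] V | r ∈ W ∧ IsReflection r})
    (P : Subgroup (V ≃ₗᵢ[ℝ] V)) (X₀ : Submodule ℝ V)
    (hP : P = pointwiseStabilizer W (X₀ : Set V))
    (X : Submodule ℝ V) (hX : X = fixedSubmodule P)
    (Q : Subgroup (V ≃ₗᵢ[ℝ] V)) (hQ : Q = pointwiseStabilizer W ((Xᗮ : Submodule ℝ V) : Set V))
    (N : Subgroup (V ≃ₗᵢ[ℝ] V)) (hN : N = W ⊓ Subgroup.normalizer (P : Set (V ≃ₗᵢ[ℝ] V))) :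
    (Q ≤ N ∧ ∀ n ∈ N, ∀ q ∈ Q, n * q * n⁻¹ ∈ Q) ∧
    P ⊓ Q = ⊥ ∧
    (∀ p ∈ P, ∀ q ∈ Q, p * q = q * p) ∧
    ∃ D : Subgroup (V ≃ₗᵢ[ℝ] V), D ≤ N ∧ (P ⊔ Q) ⊓ D = ⊥ ∧
      ∀ n ∈ N, ∃ x ∈ P ⊔ Q, ∃ d ∈ D, n = x * d := by
  have hPX : P = pointwiseStabilizer W X := by rw [hX, hP, pointwiseStabilizer_fixedSubmodule]
  have hXP : fixedSubmodule (pointwiseStabilizer W X) = X := hPX ▸ hX.symm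
  subst hPX hQ hN
  obtain ⟨x₀, hx₀X, hx₀⟩ := exists_mem_self_mem_chamber_roots_inter hWfin X
  obtain ⟨y₀, hy₀X, hy₀⟩ := exists_mem_self_mem_chamber_roots_inter hWfin Xᗮ
  refine ⟨⟨pointwiseStabilizer_orthogonal_le_normalizer,
      fun n hn q hq => conj_mem_pointwiseStabilizer_orthogonal hXP hn hq⟩,
    eq_bot_iff.mpr fun g hg => eq_one_of_forall_apply_eq X hg.1.2 hg.2.2,
    fun p hp q hq => commute_of_forall_apply_eq X hp.2 hq.2, _, inf_le_left,
    sup_inf_normalizer_inf_setStabilizer_eq_bot hWfin (le_closure_rootReflection_roots hWgen) hXP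
      hx₀X hx₀ hy₀,
    fun n hn => exists_mul_mem_normalizer_inf_setStabilizer hWfin hXP hx₀ hy₀X hy₀ hn⟩
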